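/- Let F₁, F₂ : A → B be lenses, let E : B → C be a lens with E ∘ F₁ = E ∘ F₂ in Lens, and suppose the get functor U E coequalises U F₁ and U F₂ in Cat. Then E coequalises F₁ and F₂ in the category Lens if and only if for every lens G : B → D with G ∘ F₁ = G ∘ F₂, every object B of B and every morphism d of D with source G B, one has φ_{G,B} d = φ_{E,B}(E(φ_{G,B} d)). -/

import Mathlib

universe u

open CategoryTheory CategoryTheory.Limits

namespace LensPaper

section OutDefs

variable {A : Type*} [Category A] {B : Type*} [Category B] {C : Type*} [Category C]

/-- The "out-set" of an object: the collection of all morphisms out of `X`,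
bundled with their targets. -/
def Out (X : A) : Type _ := Σ Y : A, X ⟶ Y

/-- The identity element of an out-set. -/
def Out.id (X : A) : Out X := ⟨X, 𝟙 X⟩

/-- Composition of a morphism out of `X` with a morphism out of its target. -/
def Out.comp {X : A} (u : Out X) (v : Out u.1) : Out X := ⟨v.1, u.2 ≫ v.2⟩

/-- Transport of out-sets along an equality of objects. -/
def Out.cast {X Y : A} (h : X = Y) (u : Out X) : Out Y := ⟨u.1, eqToHom h.symm ≫ u.2⟩

@[simp] theorem Out.cast_rfl {X : A} (u : Out X) : Out.cast rfl u = u := by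
  cases u; simp [Out.cast]; rfl

theorem Out.cast_cast {X Y Z : A} (h₁ : X = Y) (h₂ : Y = Z) (u : Out X) :
    Out.cast h₂ (Out.cast h₁ u) = Out.cast (h₁.trans h₂) u := by
  subst h₁; subst h₂; simp

/-- The action of a functor on out-sets. -/
def mapOut (F : A ⥤ B) {X : A} (u : Out X) : Out (F.obj X) := ⟨F.obj u.1, F.map u.2⟩

theorem mapOut_cast (F : A ⥤ B) {X Y : A} (h : X = Y) (u : Out X) :
    mapOut F (Out.cast h u) = Out.cast (congrArg F.obj h) (mapOut F u) := by
  subst h; simp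

/-- The set of all morphisms of a category, bundled with their endpoints. -/
def Mor (A : Type*) [Category A] : Type _ := Σ (X Y : A), X ⟶ Y

/-- The action of a functor on morphisms, as a function on bundled morphisms. -/
def mapMor (F : A ⥤ B) : Mor A → Mor B := fun m => ⟨F.obj m.1, F.obj m.2.1, F.map m.2.2⟩

/-- The set of composable pairs of morphisms of a category. -/
def CompPair (A : Type*) [Category A] : Type _ := Σ (X Y Z : A), (X ⟶ Y) × (Y ⟶ Z)

/-- The action of a functor on composable pairs. -/
def mapCompPair (F : A ⥤ B) : CompPair A → CompPair B :=
  fun p => ⟨F.obj p.1, F.obj p.2.1, F.obj p.2.2.1, (F.map p.2.2.2.1, F.map p.2.2.2.2)⟩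

/-- A functor is a discrete opfibration if every morphism out of `F.obj X`
has a unique lift to a morphism out of `X`. -/
def IsDiscreteOpfibration (F : A ⥤ B) : Prop :=
  ∀ (X : A) (u : Out (F.obj X)), ∃! v : Out X, mapOut F v = u

/-- A cosieve is an injective-on-objects discrete opfibration. -/
def IsCosieve (F : A ⥤ B) : Prop :=
  IsDiscreteOpfibration F ∧ Function.Injective F.obj

end OutDefs

/-- An (asymmetric delta) lens: a get functor together with put functions
satisfying PutGet, PutId and PutPut. -/
structure DLens (A : Type*) (B : Type*) [Category A] [Category B] where
  get : A ⥤ B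
  put : ∀ (X : A), Out (get.obj X) → Out X
  putGet : ∀ (X : A) (u : Out (get.obj X)), mapOut get (put X u) = u
  putId : ∀ (X : A), put X (Out.id (get.obj X)) = Out.id X
  putPut : ∀ (X : A) (u : Out (get.obj X)) (v : Out u.1) (h : u.1 = get.obj (put X u).1),
      put X (u.comp v) = (put X u).comp (put (put X u).1 (Out.cast h v))

namespace DLens

variable {A : Type*} [Category A] {B : Type*} [Category B] {C : Type*} [Category C]

theorem put_cast (F : DLens A B) {X₁ X₂ : A} (e : X₁ = X₂) (u : Out (F.get.obj X₁)) :
    Out.cast e (F.put X₁ u) = F.put X₂ (Out.cast (congrArg F.get.obj e) u) := by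
  subst e; simp

/-- The identity lens. -/
def id (A : Type*) [Category A] : DLens A A where
  get := Functor.id A
  put X u := u
  putGet X u := rfl
  putId X := rfl
  putPut X u v h := by
    have hv : Out.cast h v = v := Out.cast_rfl v
    rw [hv]

/-- Composition of lenses. -/
def comp (F : DLens A B) (G : DLens B C) : DLens A C where
  get := F.get ⋙ G.get
  put X u := F.put X (G.put (F.get.obj X) u)
  putGet X u := by
    show mapOut G.get (mapOut F.get (F.put X (G.put (F.get.obj X) u))) = u
    rw [F.putGet, G.putGet]
  putId X := by
    show F.put X (G.put (F.get.obj X) (Out.id (G.get.obj (F.get.obj X)))) = Out.id X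
    rw [G.putId, F.putId]
  putPut X u v h := by
    have h₁ : u.1 = G.get.obj (G.put (F.get.obj X) u).1 :=
      (congrArg Sigma.fst (G.putGet (F.get.obj X) u)).symm
    show F.put X (G.put (F.get.obj X) (u.comp v)) = _
    rw [G.putPut (F.get.obj X) u v h₁]
    have h₂ : (G.put (F.get.obj X) u).1 =
        F.get.obj (F.put X (G.put (F.get.obj X) u)).1 :=
      (congrArg Sigma.fst (F.putGet X (G.put (F.get.obj X) u))).symm
    rw [F.putPut X (G.put (F.get.obj X) u) _ h₂]
    rw [put_cast G h₂, Out.cast_cast]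

end DLens

/-- The category of small categories and (asymmetric delta) lenses. -/
def LensCat : Type (u + 1) := Cat.{u, u}

/-- Regard a small category as an object of the category of lenses. -/
def LensCat.of (C : Cat.{u, u}) : LensCat.{u} := C

/-- The underlying small category of an object of the category of lenses. -/
def LensCat.toCat (A : LensCat.{u}) : Cat.{u, u} := A

instance : Category.{u} LensCat.{u} where
  Hom A B := DLens A.toCat B.toCat
  id A := DLens.id A.toCat
  comp F G := F.comp G
  id_comp F := rfl
  comp_id F := rfl
  assoc F G H := rfl

/-- The get functor of a lens, i.e. a morphism of `LensCat` regarded as a `DLens`. -/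
def LensCat.get {A B : LensCat.{u}} (F : A ⟶ B) : A.toCat ⟶ B.toCat := (DLens.get F).toCatHom

/-- The identity-on-objects forgetful functor from the category of lenses to the
category of small categories and functors, sending a lens to its get functor. -/
def lensForget : LensCat.{u} ⥤ Cat.{u, u} where
  obj A := A.toCat
  map F := (DLens.get F).toCatHom
  map_id A := rfl
  map_comp F G := rfl

end LensPaper

/-! The forward direction is PutGet for `E`, applied to the factorisation `G = E ≫ K`.

For the converse, let `G` cofork `F1, F2`. The coequaliser `U E` gives the get functor `H` of the
mediating lens, with `U E ⋙ H = U G`. Testing the coequaliser against codiscrete categories shows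
that `U E` is surjective on objects and that every function on objects which coforks `F1, F2` is
constant on the fibres of `E`. Applied to `X ↦ (E X, G X, E ∘ φ_{G,X})`, which coforks because
`F1 ≫ G = F2 ≫ G` and `F1 ≫ E = F2 ≫ E`, this says that `E (φ_{G,X} u)` depends only on `E X`; so
`φ_{K, E X} u := E (φ_{G,X} u)` is well defined, and it satisfies the lens laws because `G` does.
The hypothesis says precisely that `E ≫ K` and `G` have the same puts, and `K` is unique because
`E` is an epimorphism of lenses, its get functor being epi and surjective on objects. -/

universe v

namespace LensPaper

section Codiscrete

variable {B C : Cat.{v, u}} {T : Type u}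

/-- `Codiscrete T` with its morphisms lifted so that it is an object of `Cat.{v, u}`. -/
abbrev codiscreteCat (T : Type u) : Cat.{v, u} := Cat.of (ULiftHom.{v} (Codiscrete T))

def toCodiscreteCat (φ : B → T) : B ⟶ (codiscreteCat T : Cat.{v, u}) :=
  (Codiscrete.functor φ ⋙ ULiftHom.up).toCatHom

theorem toCodiscreteCat_injective : Function.Injective (toCodiscreteCat (B := B) (T := T)) :=
  fun _ _ h => funext fun X =>
    congrArg (fun F : B ⟶ codiscreteCat T => Codiscrete.as (F.toFunctor.obj X)) h

theorem Cat.surjective_obj_of_epi (π : B ⟶ C) [Epi π] : Function.Surjective π.toFunctor.obj := by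
  intro Y
  have h : (fun Y => ULift.up.{u} (∃ X, π.toFunctor.obj X = Y)) = fun _ => ULift.up True :=
    toCodiscreteCat_injective <| (cancel_epi π).1 <| congrArg toCodiscreteCat <|
      funext fun X => congrArg ULift.up (eq_true ⟨X, rfl⟩)
  exact of_eq_true (congrArg ULift.down (congrFun h Y))

theorem Cat.obj_eq_of_isColimit_cofork {A : Cat.{v, u}} {f g : A ⟶ B} {π : B ⟶ C}
    {w : f ≫ π = g ≫ π} (hπ : IsColimit (Cofork.ofπ π w)) (φ : B → T)
    (hφ : ∀ a, φ (f.toFunctor.obj a) = φ (g.toFunctor.obj a)) {X X' : B}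
    (h : π.toFunctor.obj X = π.toFunctor.obj X') : φ X = φ X' := by
  have hfac := Cofork.IsColimit.π_desc' hπ (toCodiscreteCat φ)
    (toCodiscreteCat_injective.eq_iff.2 (funext hφ))
  have hφ' : ∀ X, φ X = Codiscrete.as
      ((Cofork.IsColimit.desc hπ _ _).toFunctor.obj (π.toFunctor.obj X) : codiscreteCat T) :=
    fun X => congrArg (fun F : B ⟶ codiscreteCat T => Codiscrete.as (F.toFunctor.obj X)) hfac.symm
  rw [hφ', hφ', h]

end Codiscrete

section Out

variable {A : Type*} [Category A] {B : Type*} [Category B] {C : Type*} [Category C]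

theorem Out.cast_id {X Y : A} (h : X = Y) : Out.cast h (Out.id X) = Out.id Y := by
  subst h; simp

theorem Out.cast_comp {X Y : A} (h : X = Y) (u : Out X) (v : Out u.1) :
    Out.cast h (u.comp v) = (Out.cast h u).comp v := by
  simp only [Out.cast, Out.comp, Category.assoc]; rfl

theorem Out.comp_congr_left {X : A} {u u' : Out X} (h : u = u') (v : Out u.1) :
    u.comp v = u'.comp (Out.cast (congrArg Sigma.fst h) v) := by
  subst h; simp

theorem Out.cast_apply {F : A ⥤ B} (f : ∀ X, Out (F.obj X) → Out X) {X Y : A} (h : X = Y)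
    (u : Out (F.obj X)) : Out.cast h (f X u) = f Y (Out.cast (congrArg F.obj h) u) := by
  subst h; simp

theorem mapOut_id (F : A ⥤ B) (X : A) : mapOut F (Out.id X) = Out.id (F.obj X) := by
  simp only [mapOut, Out.id, F.map_id]; rfl

theorem mapOut_comp (F : A ⥤ B) {X : A} (u : Out X) (v : Out u.1) :
    mapOut F (u.comp v) = (mapOut F u).comp (mapOut F v) := by
  simp only [mapOut, Out.comp, F.map_comp]; rfl

theorem mapOut_mapOut (F : A ⥤ B) (G : B ⥤ C) {X : A} (u : Out X) :
    mapOut G (mapOut F u) = mapOut (F ⋙ G) u :=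
  rfl

theorem mapOut_congr {F G : A ⥤ B} (h : F = G) {X : A} (u : Out X) :
    mapOut G u = Out.cast (congrArg (fun P => P.obj X) h) (mapOut F u) := by
  subst h; simp

theorem sigma_outFun_eq_iff {Y Y' : B} {Z Z' : C} (hY : Y = Y') (hZ : Z = Z')
    (f : Out Z → Out Y) (f' : Out Z' → Out Y') :
    (⟨Y, Z, f⟩ : Σ (Y : B) (Z : C), Out Z → Out Y) = ⟨Y', Z', f'⟩ ↔
      ∀ v, Out.cast hY (f v) = f' (Out.cast hZ v) := by
  subst hY hZ
  simp [funext_iff]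

end Out

namespace DLens

variable {A : Type*} [Category A] {B : Type*} [Category B] {C : Type*} [Category C]
  {D : Type*} [Category D]

theorem ext_of_get_eq {F G : DLens A B} (hget : F.get = G.get)
    (hput : ∀ (X : A) (u : Out (F.get.obj X)),
      G.put X (Out.cast (congrArg (fun P => P.obj X) hget) u) = F.put X u) :
    F = G := by
  obtain ⟨get, put, putGet, putId, putPut⟩ := F
  obtain ⟨get', put', putGet', putId', putPut'⟩ := G
  dsimp only at hget
  subst hget
  have : put = put' := funext fun X => funext fun u => by simpa using (hput X u).symm
  subst this
  rfl

theorem put_congr {F G : DLens A B} (h : F = G) (X : A) (u : Out (F.get.obj X)) :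
    G.put X (Out.cast (congrArg (fun P => P.get.obj X) h) u) = F.put X u := by
  subst h; simp

theorem cast_mapOut_eq_of_put_eq {F₁ F₂ : DLens A B} {E : B ⥤ C}
    (hE : F₁.get ⋙ E = F₂.get ⋙ E) {X : A} {v₁ : Out (F₁.get.obj X)}
    {v₂ : Out (F₂.get.obj X)} (h : F₁.put X v₁ = F₂.put X v₂) :
    Out.cast (congrArg (fun P => P.obj X) hE) (mapOut E v₁) = mapOut E v₂ := by
  rw [← F₁.putGet X v₁, ← F₂.putGet X v₂, h]
  exact (mapOut_congr hE _).symm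

def PutDescends (E : DLens B C) (G : DLens B D) : Prop :=
  ∀ (X X' : B) (hEX : E.get.obj X = E.get.obj X') (hGX : G.get.obj X = G.get.obj X')
    (u : Out (G.get.obj X)),
    Out.cast hEX (mapOut E.get (G.put X u)) = mapOut E.get (G.put X' (Out.cast hGX u))

section Descend

variable {E : DLens B C} {G : DLens B D} {H : C ⥤ D} (hH : E.get ⋙ H = G.get)
  (hE : Function.Surjective E.get.obj)

/-- Computed at an arbitrary preimage of `Y`: under `PutDescends E G` the choice does not
matter (`descendPut_obj`). -/
noncomputable def descendPut (Y : C) (u : Out (H.obj Y)) : Out Y :=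
  Out.cast (Function.surjInv_eq hE Y) <| mapOut E.get <|
    G.put (Function.surjInv hE Y) <| Out.cast
      ((congrArg H.obj (Function.surjInv_eq hE Y)).symm.trans
        (congrArg (fun P => P.obj (Function.surjInv hE Y)) hH)) u

theorem descendPut_obj (hdesc : PutDescends E G) (X : B) (u : Out (H.obj (E.get.obj X))) :
    descendPut hH hE (E.get.obj X) u =
      mapOut E.get (G.put X (Out.cast (congrArg (fun P => P.obj X) hH) u)) := by
  have hGX : G.get.obj (Function.surjInv hE (E.get.obj X)) = G.get.obj X := by
    rw [← hH]; exact congrArg H.obj (Function.surjInv_eq hE _)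
  rw [descendPut, hdesc _ X _ hGX, Out.cast_cast]

theorem descendPut_mapOut_fst (hdesc : PutDescends E G) {X : B} (p : Out X)
    (u : Out (H.obj (mapOut E.get p).1)) :
    descendPut hH hE (mapOut E.get p).1 u =
      mapOut E.get (G.put p.1 (Out.cast (congrArg (fun P => P.obj p.1) hH) u)) :=
  descendPut_obj hH hE hdesc p.1 u

theorem mapOut_descendPut (hdesc : PutDescends E G) (Y : C) (u : Out (H.obj Y)) :
    mapOut H (descendPut hH hE Y u) = u := by
  obtain ⟨X, rfl⟩ := hE Y
  rw [descendPut_obj hH hE hdesc, mapOut_mapOut, mapOut_congr hH.symm, G.putGet, Out.cast_cast,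
    Out.cast_rfl]

theorem descendPut_id (hdesc : PutDescends E G) (Y : C) :
    descendPut hH hE Y (Out.id (H.obj Y)) = Out.id Y := by
  obtain ⟨X, rfl⟩ := hE Y
  rw [descendPut_obj hH hE hdesc, Out.cast_id, G.putId, mapOut_id]

theorem descendPut_comp (hdesc : PutDescends E G) (Y : C) (u : Out (H.obj Y)) (v : Out u.1)
    (h : u.1 = H.obj (descendPut hH hE Y u).1) :
    descendPut hH hE Y (u.comp v) =
      (descendPut hH hE Y u).comp (descendPut hH hE _ (Out.cast h v)) := by
  obtain ⟨X, rfl⟩ := hE Y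
  have hlift := congrArg Sigma.fst (G.putGet X (Out.cast (congrArg (fun P => P.obj X) hH) u)).symm
  rw [Out.comp_congr_left (descendPut_obj hH hE hdesc X u), Out.cast_apply (descendPut hH hE),
    descendPut_obj hH hE hdesc X, Out.cast_comp, G.putPut X _ v hlift, mapOut_comp,
    descendPut_mapOut_fst hH hE hdesc, Out.cast_cast]
  exact congrArg (fun w => (mapOut E.get _).comp (mapOut E.get (G.put _ w)))
    (Out.cast_cast _ _ v).symm

noncomputable def descend (hdesc : PutDescends E G) : DLens C D where
  get := H
  put := descendPut hH hE
  putGet := mapOut_descendPut hH hE hdesc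
  putId := descendPut_id hH hE hdesc
  putPut := descendPut_comp hH hE hdesc

theorem comp_descend (hdesc : PutDescends E G)
    (hput : ∀ (X : B) (u : Out (G.get.obj X)), G.put X u = E.put X (mapOut E.get (G.put X u))) :
    E.comp (descend hH hE hdesc) = G :=
  ext_of_get_eq hH fun X u =>
    (hput X _).trans (congrArg (E.put X) (descendPut_obj hH hE hdesc X u).symm)

end Descend

end DLens

theorem LensCat.epi_of_epi_get {B C : LensCat.{u}} (E : B ⟶ C) [Epi (lensForget.map E)] :
    Epi E where
  left_cancellation {D} K K' h := by
    have hget : lensForget.map K = lensForget.map K' :=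
      (cancel_epi (lensForget.map E)).1 (by rw [← Functor.map_comp, ← Functor.map_comp, h])
    refine DLens.ext_of_get_eq (congrArg Cat.Hom.toFunctor hget) fun Y u => ?_
    obtain ⟨X, rfl⟩ := Cat.surjective_obj_of_epi (lensForget.map E) Y
    exact (DLens.putGet E X _).symm.trans <|
      (congrArg (mapOut (DLens.get E)) (DLens.put_congr h X u)).trans (DLens.putGet E X _)

theorem LensCat.putDescends_of_isColimit {A B C D : LensCat.{u}} {F1 F2 : A ⟶ B} {E : B ⟶ C}
    {wU : lensForget.map F1 ≫ lensForget.map E = lensForget.map F2 ≫ lensForget.map E}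
    (hUE : IsColimit (Cofork.ofπ (lensForget.map E) wU)) {G : B ⟶ D} (hG : F1 ≫ G = F2 ≫ G) :
    DLens.PutDescends E G := by
  intro X X' hEX hGX u
  have hE := congrArg Cat.Hom.toFunctor wU
  let φ (X : B.toCat) : Σ (Y : C.toCat) (Z : D.toCat), Out Z → Out Y :=
    ⟨(DLens.get E).obj X, (DLens.get G).obj X, fun v => mapOut (DLens.get E) (DLens.put G X v)⟩
  have hφ : φ X = φ X' := Cat.obj_eq_of_isColimit_cofork hUE φ (fun a =>
    (sigma_outFun_eq_iff (congrArg (fun P => P.obj a) hE)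
      (congrArg (fun P => (DLens.get P).obj a) hG) _ _).2 fun v =>
        DLens.cast_mapOut_eq_of_put_eq hE (DLens.put_congr hG a v).symm) hEX
  exact (sigma_outFun_eq_iff hEX hGX _ _).1 hφ u

end LensPaper

open CategoryTheory CategoryTheory.Limits LensPaper

/-- Let `F1, F2 : A ⟶ B` be lenses and `E : B ⟶ C` a cofork of
them in `Lens` whose get functor coequalises `U F1` and `U F2` in `Cat`. Then `E`
coequalises `F1` and `F2` in `Lens` iff for every lens `G` coforking `F1` and
`F2`, every object `X` and every morphism `u` out of `G X`, one has
`φ_{G,X} u = φ_{E,X} (E (φ_{G,X} u))`. -/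
theorem condition_for_reflection (A B C : LensCat.{u}) (F1 F2 : A ⟶ B)
    (E : B ⟶ C) (w : F1 ≫ E = F2 ≫ E)
    (wU : lensForget.map F1 ≫ lensForget.map E = lensForget.map F2 ≫ lensForget.map E)
    (hUE : IsColimit (Cofork.ofπ (lensForget.map E) wU)) :
    Nonempty (IsColimit (Cofork.ofπ E w)) ↔
      ∀ (D : LensCat.{u}) (G : B ⟶ D), F1 ≫ G = F2 ≫ G →
        ∀ (X : B.toCat) (u : Out ((DLens.get G).obj X)),
          DLens.put G X u = DLens.put E X (mapOut (DLens.get E) (DLens.put G X u)) := by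
  constructor
  · rintro ⟨hE⟩ D G hG X u
    obtain ⟨K, rfl : E ≫ K = G, -⟩ := Cofork.IsColimit.existsUnique hE G hG
    exact congrArg (DLens.put E X) (DLens.putGet E X _).symm
  · intro hput
    have : Epi (lensForget.map E) := Cofork.IsColimit.epi hUE
    have : Epi E := LensCat.epi_of_epi_get E
    refine ⟨Cofork.IsColimit.ofExistsUnique fun s => ?_⟩
    obtain ⟨H, hH, -⟩ := Cofork.IsColimit.existsUnique hUE (lensForget.map s.π)
      (by rw [← Functor.map_comp, ← Functor.map_comp, s.condition])
    have hK := DLens.comp_descend (congrArg Cat.Hom.toFunctor hH)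
      (Cat.surjective_obj_of_epi (lensForget.map E))
      (LensCat.putDescends_of_isColimit hUE s.condition) (hput s.pt s.π s.condition)
    exact ⟨_, hK, fun K hK' => (cancel_epi E).1 (hK'.trans hK.symm)⟩
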